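/- arXiv:1310.3439 — 3 statements merged into one kernel-verified Lean document; each statement's English description precedes it below -/
import Mathlib

section
/- Let n ≥ 1 be a natural number, let δ > 0, Λ ≥ 1, K₁ ≥ 0, K₂ ≥ 0 be real numbers, and set ε := δ/(4·n⁴·Λ²). Let H, μ, a be real numbers with H > 0, (1+δ)·H ≤ μ ≤ Λ·H, and a² ≤ (1+ε)·H² + K₂. Then H·μ² − a²·μ − n³·(n·ε·μ + K₁)·μ² ≥ (δ/2)·H²·μ − n³·K₁·Λ²·H² − K₂·Λ·H. -/
/-!
Each term of the left-hand side is compared with `H² μ`: `μ ≥ (1 + δ) H` gives `H μ² ≥ (1 + δ) H² μ`,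
the convexity estimate costs `(1 + ε) H² μ + K₂ Λ H`, and `μ ≤ Λ H` turns the cubic term
`n⁴ ε μ³` into at most `n⁴ Λ² ε H² μ = (δ / 4) H² μ`. Since also `ε ≤ δ / 4`, a margin `δ / 2` is left.
-/

theorem key_pointwise_estimate_of_le {N δ ε Λ K₁ K₂ H μ a : ℝ} (hN : 0 ≤ N)
    (hε : 0 ≤ ε) (hεδ : ε ≤ δ / 4) (hNΛε : N ^ 4 * Λ ^ 2 * ε ≤ δ / 4)
    (hK₁ : 0 ≤ K₁) (hK₂ : 0 ≤ K₂) (hH : 0 < H)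
    (hμ₁ : (1 + δ) * H ≤ μ) (hμ₂ : μ ≤ Λ * H) (ha : a ^ 2 ≤ (1 + ε) * H ^ 2 + K₂) :
    H * μ ^ 2 - a ^ 2 * μ - N ^ 3 * (N * ε * μ + K₁) * μ ^ 2 ≥
      (δ / 2) * H ^ 2 * μ - N ^ 3 * K₁ * Λ ^ 2 * H ^ 2 - K₂ * Λ * H := by
  have hμ : 0 < μ := lt_of_lt_of_le (by nlinarith) hμ₁
  have hμsq : μ ^ 2 ≤ Λ ^ 2 * H ^ 2 := by
    rw [← mul_pow]; exact pow_le_pow_left₀ hμ.le hμ₂ 2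
  have hmain : (1 + δ) * H ^ 2 * μ ≤ H * μ ^ 2 := by
    nlinarith [mul_le_mul_of_nonneg_left hμ₁ (mul_pos hH hμ).le]
  have hconvex : a ^ 2 * μ ≤ (1 + ε) * H ^ 2 * μ + K₂ * Λ * H := by
    nlinarith [mul_le_mul_of_nonneg_right ha hμ.le, mul_le_mul_of_nonneg_left hμ₂ hK₂]
  have hcubic : N ^ 4 * ε * μ ^ 3 ≤ (δ / 4) * H ^ 2 * μ :=
    calc N ^ 4 * ε * μ ^ 3 = N ^ 4 * ε * μ ^ 2 * μ := by ring
      _ ≤ N ^ 4 * ε * (Λ ^ 2 * H ^ 2) * μ := by gcongr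
      _ = N ^ 4 * Λ ^ 2 * ε * (H ^ 2 * μ) := by ring
      _ ≤ δ / 4 * (H ^ 2 * μ) := by gcongr
      _ = (δ / 4) * H ^ 2 * μ := by ring
  have hK₁term : N ^ 3 * K₁ * μ ^ 2 ≤ N ^ 3 * K₁ * Λ ^ 2 * H ^ 2 := by
    rw [mul_assoc _ (Λ ^ 2)]; gcongr
  have hεterm : ε * H ^ 2 * μ ≤ (δ / 4) * H ^ 2 * μ := by gcongr
  linear_combination hmain + hconvex + hcubic + hK₁term + hεterm

/-- The key pointwise estimate in the proof of Proposition 4.1. -/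
theorem key_pointwise_estimate (n : ℕ) (hn : 1 ≤ n) (δ Λ K₁ K₂ H μ a : ℝ)
    (hδ : 0 < δ) (hΛ : 1 ≤ Λ) (hK₁ : 0 ≤ K₁) (hK₂ : 0 ≤ K₂) (hH : 0 < H)
    (hμ₁ : (1 + δ) * H ≤ μ) (hμ₂ : μ ≤ Λ * H)
    (ha : a ^ 2 ≤ (1 + δ / (4 * (n : ℝ) ^ 4 * Λ ^ 2)) * H ^ 2 + K₂) :
    H * μ ^ 2 - a ^ 2 * μ - (n : ℝ) ^ 3 *
        ((n : ℝ) * (δ / (4 * (n : ℝ) ^ 4 * Λ ^ 2)) * μ + K₁) * μ ^ 2 ≥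
      (δ / 2) * H ^ 2 * μ - (n : ℝ) ^ 3 * K₁ * Λ ^ 2 * H ^ 2 - K₂ * Λ * H := by
  have hc : 1 ≤ (n : ℝ) ^ 4 * Λ ^ 2 :=
    one_le_mul_of_one_le_of_one_le (one_le_pow₀ (by exact_mod_cast hn)) (one_le_pow₀ hΛ)
  have hε_eq : δ / (4 * (n : ℝ) ^ 4 * Λ ^ 2) = δ / 4 / ((n : ℝ) ^ 4 * Λ ^ 2) := by ring
  refine key_pointwise_estimate_of_le (Nat.cast_nonneg n) (by positivity) ?_ ?_ hK₁ hK₂ hH hμ₁ hμ₂ ha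
  · rw [hε_eq]; exact div_le_self (by positivity) hc
  · rw [hε_eq, mul_div_cancel₀ _ (by positivity)]
end

section
/- Let E be a real Hilbert space, let H, μ : E → ℝ be differentiable at a point x with H(x) > 0 and μ(x) > 0, let σ ∈ (0,1), c ≥ 0, K₀ ∈ ℝ, and define f : E → ℝ by f(y) = H(y)^(σ−1)·(μ(y) − c·H(y)) − K₀, where powers denote real exponentiation (Real.rpow). Then ⟪gradient H x, gradient f x⟫ / H(x) ≤ ⟪gradient μ x, gradient f x⟫ / ((1−σ)·μ(x) + σ·c·H(x)). -/
open scoped RealInnerProductSpace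

/-!
With `D = (1 - σ) μ + σ c H > 0`, the chain rule gives `∇f_σ = H^(σ-2) • (H • ∇μ - D • ∇H)`,
hence `H ⟪∇μ, ∇f_σ⟫ - D ⟪∇H, ∇f_σ⟫ = H^(2-σ) ‖∇f_σ‖² ≥ 0`.
-/

section GradientCalculus

variable {F : Type*} [NormedAddCommGroup F] [InnerProductSpace ℝ F] [CompleteSpace F]
  {f g : F → ℝ} {f' g' x : F}

theorem HasGradientAt.mul (hf : HasGradientAt f f' x) (hg : HasGradientAt g g' x) :
    HasGradientAt (fun y => f y * g y) (f x • g' + g x • f') x := by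
  rw [hasGradientAt_iff_hasFDerivAt] at *
  rw [map_add, map_smul, map_smul]
  exact hf.mul hg

theorem HasGradientAt.sub (hf : HasGradientAt f f' x) (hg : HasGradientAt g g' x) :
    HasGradientAt (fun y => f y - g y) (f' - g') x := by
  rw [hasGradientAt_iff_hasFDerivAt] at *
  rw [map_sub]
  exact hf.sub hg

theorem HasGradientAt.const_mul (hf : HasGradientAt f f' x) (c : ℝ) :
    HasGradientAt (fun y => c * f y) (c • f') x := by
  rw [hasGradientAt_iff_hasFDerivAt] at *
  simpa only [map_smul] using hf.const_mul c

theorem HasGradientAt.sub_const (hf : HasGradientAt f f' x) (c : ℝ) :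
    HasGradientAt (fun y => f y - c) f' x := by
  rw [hasGradientAt_iff_hasFDerivAt] at *
  exact hf.sub_const c

theorem HasGradientAt.rpow_const {p : ℝ} (hf : HasGradientAt f f' x) (h : f x ≠ 0 ∨ 1 ≤ p) :
    HasGradientAt (fun y => f y ^ p) ((p * f x ^ (p - 1)) • f') x := by
  rw [hasGradientAt_iff_hasFDerivAt] at *
  simpa only [map_smul] using hf.rpow_const h

end GradientCalculus

theorem inner_div_le_inner_div_of_eq_smul {F : Type*} [NormedAddCommGroup F]
    [InnerProductSpace ℝ F]
    {u v w : F} {a b t : ℝ} (ha : 0 < a) (hb : 0 < b) (ht : 0 ≤ t)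
    (hw : w = t • (a • v - b • u)) : ⟪u, w⟫ / a ≤ ⟪v, w⟫ / b := by
  have hdiff : a * ⟪v, w⟫ - b * ⟪u, w⟫ = t * ‖a • v - b • u‖ ^ 2 := by
    rw [← real_inner_smul_left, ← real_inner_smul_left, ← inner_sub_left, hw,
      real_inner_smul_right, real_inner_self_eq_norm_sq]
  rw [div_le_div_iff₀ ha hb]
  nlinarith [mul_nonneg ht (sq_nonneg ‖a • v - b • u‖)]

theorem hasGradientAt_rpow_mul_sub_const {F : Type*} [NormedAddCommGroup F]
    [InnerProductSpace ℝ F] [CompleteSpace F] {H μ : F → ℝ} {gH gμ x : F}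
    (hH : HasGradientAt H gH x) (hμ : HasGradientAt μ gμ x) (hHx : 0 < H x) (σ c K₀ : ℝ) :
    HasGradientAt (fun y => H y ^ (σ - 1) * (μ y - c * H y) - K₀)
      (H x ^ (σ - 2) • (H x • gμ - ((1 - σ) * μ x + σ * c * H x) • gH)) x := by
  convert (((hH.rpow_const (Or.inl hHx.ne')).mul (hμ.sub (hH.const_mul c))).sub_const K₀)
    using 1
  have hpow : H x ^ (σ - 1) = H x ^ (σ - 2) * H x := by
    rw [← Real.rpow_add_one hHx.ne']; ring_nf
  rw [hpow, show σ - 1 - 1 = σ - 2 by ring]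
  module

/-- The inequality `⟨∇H, ∇f_σ⟩/H ≤ ⟨∇μ, ∇f_σ⟩/((1-σ)·μ + σ·c·H)` where
`f_σ = H^(σ-1)·(μ - c·H) - K₀`. -/
theorem gradient_inner_inequality_fsigma {E : Type*} [NormedAddCommGroup E]
    [InnerProductSpace ℝ E] [CompleteSpace E]
    (H μ : E → ℝ) (x : E) (σ c K₀ : ℝ)
    (hH : DifferentiableAt ℝ H x) (hμ : DifferentiableAt ℝ μ x)
    (hHx : 0 < H x) (hμx : 0 < μ x) (hσ : σ ∈ Set.Ioo (0 : ℝ) 1) (hc : 0 ≤ c) :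
    ⟪gradient H x, gradient (fun y => H y ^ (σ - 1) * (μ y - c * H y) - K₀) x⟫ / H x ≤
      ⟪gradient μ x, gradient (fun y => H y ^ (σ - 1) * (μ y - c * H y) - K₀) x⟫ /
        ((1 - σ) * μ x + σ * c * H x) := by
  obtain ⟨hσ0, hσ1⟩ := hσ
  have hD : 0 < (1 - σ) * μ x + σ * c * H x :=
    add_pos_of_pos_of_nonneg (mul_pos (sub_pos.2 hσ1) hμx) (by positivity)
  exact inner_div_le_inner_div_of_eq_smul hHx hD (Real.rpow_nonneg hHx.le _)
    (hasGradientAt_rpow_mul_sub_const hH.hasGradientAt hμ.hasGradientAt hHx σ c K₀).gradient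
end

section
/- Let E be a real Hilbert space, let H, μ : E → ℝ be differentiable at a point x with H(x) > 0, let σ ∈ (0,1), c ≥ 1, K₀ ≥ 0, and define f : E → ℝ by f(y) = H(y)^(σ−1)·(μ(y) − c·H(y)) − K₀, where powers denote real exponentiation (Real.rpow). If f(x) > 0, then ‖gradient H x‖ / H(x) ≤ (1/(1−σ)) · ( ‖gradient μ x‖ / H(x) + ‖gradient f x‖ / f(x) ). -/
/-!
Differentiating, `∇f_σ = H^(σ-1) ∇μ - A ∇H` with `A = c H^(σ-1) + (1-σ)(f_σ + K₀)/H`, and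
`A ≥ c H^(σ-1) + (1-σ) f_σ/H`; the triangle inequality gives
`A ‖∇H‖ ≤ H^(σ-1) ‖∇μ‖ + ‖∇f_σ‖`. If `‖∇H‖ ≤ ‖∇μ‖` the claim is immediate; otherwise, as
`c ≥ 1`, the term `c H^(σ-1) ‖∇H‖` absorbs `H^(σ-1) ‖∇μ‖`, leaving `(1-σ) f_σ ‖∇H‖/H ≤ ‖∇f_σ‖`.
-/

open InnerProductSpace

theorem norm_gradient_eq_norm_fderiv {E : Type*} [NormedAddCommGroup E] [InnerProductSpace ℝ E]
    [CompleteSpace E] (f : E → ℝ) (x : E) : ‖gradient f x‖ = ‖fderiv ℝ f x‖ :=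
  (toDual ℝ E).symm.norm_map _

theorem HasFDerivAt.rpow_const_mul_sub_const_mul_sub {E : Type*} [NormedAddCommGroup E]
    [NormedSpace ℝ E] {H μ : E → ℝ} {a b : E →L[ℝ] ℝ} {x : E}
    (hH : HasFDerivAt H a x) (hμ : HasFDerivAt μ b x) (hx : 0 < H x) (p c K : ℝ) :
    HasFDerivAt (fun y => H y ^ p * (μ y - c * H y) - K)
      (H x ^ p • b - (c * H x ^ p - p * (H x ^ p * (μ x - c * H x)) / H x) • a) x := by
  refine (((hH.rpow_const (Or.inl hx.ne')).mul (hμ.sub (hH.const_mul c))).sub_const K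
    ).congr_fderiv ?_
  rw [Real.rpow_sub_one hx.ne', Pi.sub_apply]
  module

theorem div_le_inv_mul_add_div_of_mul_le {na nb nF h t f s c : ℝ} (hh : 0 < h) (ht : 0 ≤ t)
    (hf : 0 < f) (hs : 0 < s) (hs1 : s ≤ 1) (hc : 1 ≤ c) (hnb : 0 ≤ nb) (hnF : 0 ≤ nF)
    (hle : (c * t + s * f / h) * na ≤ t * nb + nF) :
    na / h ≤ s⁻¹ * (nb / h + nF / f) := by
  rcases le_or_gt na nb with hab | hab
  · calc na / h ≤ nb / h := by gcongr
      _ ≤ s⁻¹ * (nb / h) := le_mul_of_one_le_left (by positivity) (one_le_inv_iff₀.mpr ⟨hs, hs1⟩)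
      _ ≤ s⁻¹ * (nb / h + nF / f) := by gcongr; exact le_add_of_nonneg_right (by positivity)
  · -- `c * t * na` absorbs `t * nb`
    have hna : s * f / h * na ≤ nF := by
      nlinarith [mul_le_mul_of_nonneg_left hab.le ht,
        mul_nonneg (mul_nonneg (sub_nonneg.2 hc) ht) (hnb.trans hab.le)]
    calc na / h = s⁻¹ * (s * f / h * na / f) := by field_simp
      _ ≤ s⁻¹ * (nF / f) := by gcongr
      _ ≤ s⁻¹ * (nb / h + nF / f) := by gcongr; exact le_add_of_nonneg_left (by positivity)

/-- The estimate `‖∇H‖/H ≤ (1/(1-σ))·(‖∇μ‖/H + ‖∇f_σ‖/f_σ)` on `{f_σ > 0}`,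
where `f_σ = H^(σ-1)·(μ - c·H) - K₀`. -/
theorem gradient_norm_inequality_fsigma {E : Type*} [NormedAddCommGroup E]
    [InnerProductSpace ℝ E] [CompleteSpace E]
    (H μ : E → ℝ) (x : E) (σ c K₀ : ℝ)
    (hH : DifferentiableAt ℝ H x) (hμ : DifferentiableAt ℝ μ x)
    (hHx : 0 < H x) (hσ : σ ∈ Set.Ioo (0 : ℝ) 1) (hc : 1 ≤ c) (hK : 0 ≤ K₀)
    (hfx : 0 < H x ^ (σ - 1) * (μ x - c * H x) - K₀) :
    ‖gradient H x‖ / H x ≤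
      (1 / (1 - σ)) *
        (‖gradient μ x‖ / H x +
          ‖gradient (fun y => H y ^ (σ - 1) * (μ y - c * H y) - K₀) x‖ /
            (H x ^ (σ - 1) * (μ x - c * H x) - K₀)) := by
  set f := H x ^ (σ - 1) * (μ x - c * H x) - K₀ with hf
  set t := H x ^ (σ - 1)
  have ht : 0 < t := Real.rpow_pos_of_pos hHx _
  have hderiv := hH.hasFDerivAt.rpow_const_mul_sub_const_mul_sub hμ.hasFDerivAt hHx (σ - 1) c K₀
  have hσ' : 0 < 1 - σ := sub_pos.mpr hσ.2
  set A := c * t - (σ - 1) * (t * (μ x - c * H x)) / H x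
  have hA : c * t + (1 - σ) * f / H x ≤ A := by
    have hA_eq : A = c * t + (1 - σ) * (f + K₀) / H x := by simp only [A, hf]; ring
    rw [hA_eq]; gcongr; linarith
  have hkey : (c * t + (1 - σ) * f / H x) * ‖fderiv ℝ H x‖
      ≤ t * ‖fderiv ℝ μ x‖ + ‖fderiv ℝ _ x‖ :=
    calc (c * t + (1 - σ) * f / H x) * ‖fderiv ℝ H x‖ ≤ A * ‖fderiv ℝ H x‖ := by gcongr
      _ ≤ ‖A • fderiv ℝ H x‖ := by rw [norm_smul]; gcongr; exact Real.le_norm_self A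
      _ = ‖t • fderiv ℝ μ x - fderiv ℝ _ x‖ := by rw [hderiv.fderiv, sub_sub_cancel]
      _ ≤ t * ‖fderiv ℝ μ x‖ + ‖fderiv ℝ _ x‖ := by
        grw [norm_sub_le, norm_smul, Real.norm_of_nonneg ht.le]
  simp only [norm_gradient_eq_norm_fderiv, one_div]
  exact div_le_inv_mul_add_div_of_mul_le hHx ht.le hfx hσ'
    (by linarith [hσ.1]) hc (norm_nonneg _) (norm_nonneg _) hkey
end
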